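/- arXiv:1607.08185 — 3 statements merged into one kernel-verified Lean document; each statement's English description precedes it below -/
import Mathlib

section
/- If X is a path-connected topological space and there exists a continuous section s : X × X → P(X) of the endpoint fibration p (i.e., p ∘ s = id on all of X × X), then X is contractible. Conversely, if X is contractible, such a global continuous section exists; hence TC(X) = 1 if and only if X is contractible. -/
/-!
A global section `s` yields the contraction `(t, x) ↦ s (x, x₀) t`; conversely a contraction `H`
onto `x₀` yields the section sending `(a, b)` to the path `H(·, a)` followed by `H(·, b)` reversed.
Since the empty cover cannot cover `X × X`, `TC(X) = 1` says exactly that `X × X` itself carries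
a continuous section.
-/

open unitInterval

/-- The endpoint map `p : P(X) → X × X`, `p(σ) = (σ(0), σ(1))`, on the space of paths
`C([0,1], X)` with the compact-open topology. -/
def pathEndpoints (X : Type*) [TopologicalSpace X] : C(unitInterval, X) → X × X :=
  fun γ => (γ 0, γ 1)

/-- `TCle X k` : `X × X` admits a cover by `k` open sets, each with a continuous section of the
endpoint map. -/
def TCle (X : Type*) [TopologicalSpace X] (k : ℕ) : Prop :=
  ∃ (U : Fin k → Set (X × X)) (s : Fin k → (X × X) → C(unitInterval, X)),
    (∀ i, IsOpen (U i)) ∧ (⋃ i, U i) = Set.univ ∧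
    ∀ i, ContinuousOn (s i) (U i) ∧ ∀ p ∈ U i, pathEndpoints X (s i p) = p

/-- Farber's topological complexity, valued in `ℕ∞` (so `topComplexity X = ⊤`, i.e. `∞`, if no
finite cover works). -/
noncomputable def topComplexity (X : Type*) [TopologicalSpace X] : ℕ∞ :=
  sInf {n : ℕ∞ | ∃ k : ℕ, n = k ∧ TCle X k}

section

variable {X : Type*} [TopologicalSpace X]

theorem ContractibleSpace.of_pathEndpoints_section [Nonempty X]
    (s : C(X × X, C(I, X))) (hs : ∀ p : X × X, pathEndpoints X (s p) = p) :
    ContractibleSpace X := by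
  obtain ⟨x₀⟩ := ‹Nonempty X›
  rw [contractible_iff_id_nullhomotopic]
  refine ⟨x₀, ⟨⟨⟨fun tx => s (tx.2, x₀) tx.1, by fun_prop⟩, ?_, ?_⟩⟩⟩
  · exact fun x => congrArg Prod.fst (hs (x, x₀))
  · exact fun x => congrArg Prod.snd (hs (x, x₀))

theorem exists_pathEndpoints_section [ContractibleSpace X] :
    ∃ s : C(X × X, C(I, X)), ∀ p : X × X, pathEndpoints X (s p) = p := by
  obtain ⟨x₀, ⟨H⟩⟩ := (contractible_iff_id_nullhomotopic X).mp ‹_›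
  let γ := fun p : X × X => (H.evalAt p.1).trans (H.evalAt p.2).symm
  have hγ : Continuous ↿γ :=
    Path.trans_continuous_family _ (H.continuous.comp (by fun_prop)) _
      (Path.symm_continuous_family _ (H.continuous.comp (by fun_prop)))
  exact ⟨ContinuousMap.curry ⟨↿γ, hγ⟩, fun p => Prod.ext (γ p).source (γ p).target⟩

theorem not_TCle_zero [Nonempty X] : ¬ TCle X 0 := by
  rintro ⟨U, s, -, hcov, -⟩
  rw [Set.iUnion_of_empty] at hcov
  exact Set.empty_ne_univ hcov

theorem TCle_one_iff :
    TCle X 1 ↔ ∃ s : C(X × X, C(I, X)), ∀ p : X × X, pathEndpoints X (s p) = p := by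
  constructor
  · rintro ⟨U, s, -, hcov, hsec⟩
    have hU : U 0 = Set.univ := (iSup_unique U).symm.trans hcov
    obtain ⟨hcont, hends⟩ := hsec 0
    rw [hU, continuousOn_univ] at hcont
    exact ⟨⟨s 0, hcont⟩, fun p => hends p (hU ▸ Set.mem_univ p)⟩
  · rintro ⟨s, hs⟩
    exact ⟨fun _ => Set.univ, fun _ => s, fun _ => isOpen_univ, Set.iUnion_const _,
      fun _ => ⟨s.continuous.continuousOn, fun p _ => hs p⟩⟩

theorem topComplexity_eq_one_iff [Nonempty X] : topComplexity X = 1 ↔ TCle X 1 := by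
  constructor
  · intro h
    have hne : {n : ℕ∞ | ∃ k : ℕ, n = k ∧ TCle X k}.Nonempty :=
      Set.nonempty_iff_ne_empty.mpr fun he => by simp [topComplexity, he] at h
    obtain ⟨k, hk, hTC⟩ := csInf_mem hne
    rw [← topComplexity, h, eq_comm, Nat.cast_eq_one] at hk
    exact hk ▸ hTC
  · intro h
    refine le_antisymm (sInf_le ⟨1, Nat.cast_one.symm, h⟩) (le_sInf ?_)
    rintro _ ⟨k, rfl, hk⟩
    have hk0 : k ≠ 0 := by
      rintro rfl
      exact not_TCle_zero hk
    exact_mod_cast Nat.one_le_iff_ne_zero.mpr hk0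

end

/-- For a path-connected space `X`, a global continuous section of the endpoint fibration exists
iff `X` is contractible; consequently `TC(X) = 1` iff `X` is contractible. -/
theorem stmt_1 (X : Type*) [TopologicalSpace X] [PathConnectedSpace X] :
    ((∃ s : C(X × X, C(unitInterval, X)), ∀ p : X × X, pathEndpoints X (s p) = p) ↔
      ContractibleSpace X) ∧
    (topComplexity X = 1 ↔ ContractibleSpace X) := by
  have : Nonempty X := PathConnectedSpace.nonempty
  have hsection : (∃ s : C(X × X, C(unitInterval, X)), ∀ p : X × X,
      pathEndpoints X (s p) = p) ↔ ContractibleSpace X :=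
    ⟨fun ⟨s, hs⟩ => .of_pathEndpoints_section s hs, fun _ => exists_pathEndpoints_section⟩
  exact ⟨hsection, topComplexity_eq_one_iff.trans (TCle_one_iff.trans hsection)⟩
end

section
/- Topological complexity is a homotopy invariant: if X and Y are path-connected spaces that are homotopy equivalent, then TC(X) = TC(Y). -/
open unitInterval

/-!
If `g ∘ f ≃ id_X` via `H`, a path `γ` in `Y` from `f x` to `f y` gives the path in `X`
from `x` to `y` that runs back along `H` from `x` to `g (f x)`, then along `g ∘ γ`, then along `H`
to `y`. This is continuous in `γ`, `x` and `y`, so a motion planner on `V ⊆ Y × Y` pulls back to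
one on `(f × f)⁻¹ V`, and `TC X ≤ TC Y`.
-/

section

open ContinuousMap

variable {X Y : Type*} [TopologicalSpace X] [TopologicalSpace Y]

noncomputable def pullbackPath {f : C(X, Y)} {g : C(Y, X)}
    (H : Homotopy (g.comp f) (ContinuousMap.id X)) {x y : X} (γ : Path (f x) (f y)) : Path x y :=
  ((H.evalAt x).symm.trans (γ.map g.continuous)).trans (H.evalAt y)

lemma continuous_pullbackPath_family {Z : Type*} [TopologicalSpace Z] {f : C(X, Y)}
    {g : C(Y, X)} (H : Homotopy (g.comp f) (ContinuousMap.id X)) {a b : Z → X}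
    (ha : Continuous a) (hb : Continuous b) (γ : ∀ z, Path (f (a z)) (f (b z)))
    (hγ : Continuous ↿γ) : Continuous ↿fun z => pullbackPath H (γ z) := by
  have hHa : Continuous ↿fun z => H.evalAt (a z) :=
    H.continuous.comp (continuous_snd.prodMk (ha.comp continuous_fst))
  have hHb : Continuous ↿fun z => H.evalAt (b z) :=
    H.continuous.comp (continuous_snd.prodMk (hb.comp continuous_fst))
  have hgγ : Continuous ↿fun z => (γ z).map g.continuous := g.continuous.comp hγ
  exact Path.trans_continuous_family _
    (Path.trans_continuous_family _ (Path.symm_continuous_family _ hHa) _ hgγ) _ hHb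

lemma exists_section_of_path_family {U : Set (X × X)} (γ : ∀ q : U, Path q.1.1 q.1.2)
    (hγ : Continuous ↿γ) :
    ∃ s : X × X → C(I, X), ContinuousOn s U ∧ ∀ p ∈ U, pathEndpoints X (s p) = p := by
  classical
  refine ⟨fun p => if hp : p ∈ U then γ ⟨p, hp⟩ else .const I p.1, ?_, ?_⟩
  · rw [continuousOn_iff_continuous_domRestrict]
    convert ContinuousMap.continuous_of_continuous_uncurry (fun q : U => (γ q : C(I, X))) hγ
      using 2 with q
    simp [q.2]
  · intro p hp
    simp [pathEndpoints, hp]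

lemma exists_section_preimage_prodMap {f : C(X, Y)} {g : C(Y, X)}
    (H : Homotopy (g.comp f) (ContinuousMap.id X)) {V : Set (Y × Y)} {s : Y × Y → C(I, Y)}
    (hs : ContinuousOn s V) (hends : ∀ p ∈ V, pathEndpoints Y (s p) = p) :
    ∃ s' : X × X → C(I, X), ContinuousOn s' (Prod.map f f ⁻¹' V) ∧
      ∀ p ∈ Prod.map f f ⁻¹' V, pathEndpoints X (s' p) = p := by
  set U := Prod.map f f ⁻¹' V
  let δ (q : U) : Path (f q.1.1) (f q.1.2) :=
    { toContinuousMap := s (Prod.map f f q)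
      source' := congrArg Prod.fst (hends _ q.2)
      target' := congrArg Prod.snd (hends _ q.2) }
  have hδ : Continuous ↿δ := by
    have hsU : Continuous fun q : U => s (Prod.map f f q) :=
      hs.comp_continuous (by fun_prop) fun q => q.2
    exact continuous_eval.comp (hsU.prodMap continuous_id)
  exact exists_section_of_path_family _ <| continuous_pullbackPath_family H
    (continuous_fst.comp continuous_subtype_val) (continuous_snd.comp continuous_subtype_val) δ hδ

lemma TCle.of_homotopic_comp_eq_id {f : C(X, Y)} {g : C(Y, X)}
    (hgf : (g.comp f).Homotopic (ContinuousMap.id X)) {k : ℕ} (hY : TCle Y k) : TCle X k := by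
  obtain ⟨V, s, hVopen, hVcover, hs⟩ := hY
  choose s' hs' hends' using fun i => exists_section_preimage_prodMap hgf.some (hs i).1 (hs i).2
  refine ⟨fun i => Prod.map f f ⁻¹' V i, s', fun i => (hVopen i).preimage (by fun_prop), ?_,
    fun i => ⟨hs' i, hends' i⟩⟩
  rw [← Set.preimage_iUnion, hVcover, Set.preimage_univ]

lemma topComplexity_le_of_homotopic_comp_eq_id {f : C(X, Y)} {g : C(Y, X)}
    (hgf : (g.comp f).Homotopic (ContinuousMap.id X)) :
    topComplexity X ≤ topComplexity Y := by
  apply sInf_le_sInf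
  rintro n ⟨k, rfl, hk⟩
  exact ⟨k, rfl, hk.of_homotopic_comp_eq_id hgf⟩

end

theorem stmt_2_general (X Y : Type*) [TopologicalSpace X] [TopologicalSpace Y]
    (h : ContinuousMap.HomotopyEquiv X Y) :
    topComplexity X = topComplexity Y :=
  le_antisymm (topComplexity_le_of_homotopic_comp_eq_id h.left_inv)
    (topComplexity_le_of_homotopic_comp_eq_id h.right_inv)

/-- Topological complexity is a homotopy invariant: homotopy equivalent path-connected spaces
have equal topological complexity. -/
theorem stmt_2 (X Y : Type*) [TopologicalSpace X] [TopologicalSpace Y]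
    [PathConnectedSpace X] [PathConnectedSpace Y]
    (h : ContinuousMap.HomotopyEquiv X Y) :
    topComplexity X = topComplexity Y :=
  stmt_2_general X Y h
end

section
/- Abstract version of the zero-divisor argument: Let H be a graded-commutative ℚ-algebra concentrated in degrees 0 through k with H^0 = ℚ, and suppose there exist degree-1 elements γ_1,…,γ_k, δ_1,…,δ_k ∈ H^1 such that (i) the products Φ = γ_1⋯γ_k and Ψ = δ_1⋯δ_k are nonzero, (ii) for every mixed monomial α of degree k formed from at least one γ and at least one δ among these elements, α is a scalar multiple of a basis element of H^k distinct from Φ and Ψ, or α = 0, and (iii) Φ ⊗ Ψ + Ψ ⊗ Φ ≠ 0 in H ⊗ H. Then the product (∏_{i=1}^k (γ_i⊗1 − 1⊗γ_i)) (∏_{j=1}^k (δ_j⊗1 − 1⊗δ_j)) is nonzero in the graded tensor product algebra H ⊗ H. -/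
open scoped TensorProduct

namespace Stmt9Aux

/-- All boolean selection patterns of length `n`. -/
def sels : ℕ → List (List Bool)
  | 0 => [[]]
  | n+1 => ((sels n).map (List.cons true)) ++ ((sels n).map (List.cons false))

/-- Entries of `L` at positions where `c` has value `v`. -/
def pick {α : Type*} : List α → List Bool → Bool → List α
  | a :: L, bb :: c, v => if bb = v then a :: pick L c v else pick L c v
  | _, _, _ => []

/-- The sign of a selection pattern. -/
def sgn : List Bool → ℚ
  | [] => 1
  | true :: c => sgn c
  | false :: c => (-1) ^ (1 + c.count true) * sgn c

theorem length_of_mem_sels {c : List Bool} {n : ℕ} (h : c ∈ sels n) : c.length = n := by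
  induction n generalizing c with
  | zero => simp [sels] at h; simp [h]
  | succ n ih =>
    simp only [sels, List.mem_append, List.mem_map] at h
    rcases h with ⟨c', hc', rfl⟩ | ⟨c', hc', rfl⟩ <;> simp [ih hc']

theorem mem_sels_of_length {c : List Bool} {n : ℕ} (h : c.length = n) : c ∈ sels n := by
  induction c generalizing n with
  | nil => subst h; simp [sels]
  | cons bb c ih =>
    subst h
    simp only [List.length_cons, sels, List.mem_append, List.mem_map]
    cases bb
    · exact Or.inr ⟨c, ih rfl, rfl⟩
    · exact Or.inl ⟨c, ih rfl, rfl⟩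

theorem nodup_sels (n : ℕ) : (sels n).Nodup := by
  induction n with
  | zero => simp [sels]
  | succ n ih =>
    refine List.Nodup.append (ih.map (fun a b h => by simpa using h))
      (ih.map (fun a b h => by simpa using h)) ?_
    intro x hx hy
    simp only [List.mem_map] at hx hy
    obtain ⟨c₁, -, rfl⟩ := hx
    obtain ⟨c₂, -, h⟩ := hy
    simpa using h

theorem pick_length {α : Type*} {L : List α} {c : List Bool} (v : Bool)
    (h : L.length = c.length) : (pick L c v).length = c.count v := by
  induction L generalizing c with
  | nil => cases c with
    | nil => simp [pick]
    | cons bb c => simp at h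
  | cons a L ih =>
    cases c with
    | nil => simp at h
    | cons bb c =>
      simp only [List.length_cons, Nat.succ.injEq] at h
      by_cases hb : bb = v
      · subst hb
        simp [pick, ih h, List.count_cons]
      · simp [pick, hb, ih h, List.count_cons, Ne.symm hb]

theorem mem_of_mem_pick {α : Type*} {L : List α} {c : List Bool} {v : Bool} {a : α}
    (h : a ∈ pick L c v) : a ∈ L := by
  induction L generalizing c with
  | nil => cases c <;> simp [pick] at h
  | cons x L ih =>
    cases c with
    | nil => simp [pick] at h
    | cons bb c =>
      by_cases hb : bb = v
      · rw [pick, if_pos hb] at h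
        rcases List.mem_cons.mp h with rfl | h
        · exact List.mem_cons_self
        · exact List.mem_cons_of_mem _ (ih h)
      · rw [pick, if_neg hb] at h
        exact List.mem_cons_of_mem _ (ih h)

theorem pick_replicate_same {α : Type*} {L : List α} {n : ℕ} (v : Bool)
    (h : L.length = n) : pick L (List.replicate n v) v = L := by
  induction L generalizing n with
  | nil => cases n with
    | zero => simp [pick]
    | succ n => simp at h
  | cons a L ih =>
    cases n with
    | zero => simp at h
    | succ n =>
      simp only [List.length_cons, Nat.succ.injEq] at h
      simp [List.replicate_succ, pick, ih h]

theorem pick_replicate_ne {α : Type*} (L : List α) (n : ℕ) {v w : Bool}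
    (hvw : v ≠ w) : pick L (List.replicate n v) w = [] := by
  induction L generalizing n with
  | nil => cases n <;> simp [pick]
  | cons a L ih =>
    cases n with
    | zero => simp [pick]
    | succ n => simp [List.replicate_succ, pick, hvw, ih]

theorem pick_append {α : Type*} {L₁ L₂ : List α} {c₁ c₂ : List Bool} (v : Bool)
    (h : L₁.length = c₁.length) :
    pick (L₁ ++ L₂) (c₁ ++ c₂) v = pick L₁ c₁ v ++ pick L₂ c₂ v := by
  induction L₁ generalizing c₁ with
  | nil => cases c₁ with
    | nil => simp [pick]
    | cons bb c => simp at h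
  | cons a L ih =>
    cases c₁ with
    | nil => simp at h
    | cons bb c =>
      simp only [List.length_cons, Nat.succ.injEq] at h
      by_cases hb : bb = v <;> simp [pick, hb, ih h]

theorem sgn_replicate_true (n : ℕ) : sgn (List.replicate n true) = 1 := by
  induction n with
  | zero => simp [sgn]
  | succ n ih => simpa [List.replicate_succ, sgn] using ih

theorem sgn_c0 (j n : ℕ) :
    sgn (List.replicate j false ++ List.replicate n true) = ((-1 : ℚ) ^ (1 + n)) ^ j := by
  induction j with
  | zero => simp [sgn_replicate_true]
  | succ j ih =>
    rw [List.replicate_succ, List.cons_append, sgn, ih]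
    rw [List.count_append]
    have h1 : (List.replicate j false).count true = 0 := List.count_eq_zero.mpr (by simp)
    have h2 : (List.replicate n true).count true = n := List.count_replicate_self
    rw [h1, zero_add, h2, pow_succ]
    ring

theorem sum_map_eq_of_nodup {α M : Type*} [AddCommMonoid M] {l : List α} (hl : l.Nodup)
    {a : α} (ha : a ∈ l) (f : α → M) (h0 : ∀ x ∈ l, x ≠ a → f x = 0) :
    (l.map f).sum = f a := by
  induction l with
  | nil => simp at ha
  | cons x l ih =>
    rcases List.mem_cons.mp ha with rfl | ha'
    · rw [List.map_cons, List.sum_cons]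
      have : ∀ y ∈ l, f y = 0 := fun y hy =>
        h0 y (List.mem_cons_of_mem _ hy) (fun h => (List.nodup_cons.mp hl).1 (h ▸ hy))
      rw [List.sum_eq_zero (by simpa using this), add_zero]
    · rw [List.map_cons, List.sum_cons,
        h0 x (List.mem_cons_self) (fun h => (List.nodup_cons.mp hl).1 (h ▸ ha')),
        zero_add]
      exact ih (List.nodup_cons.mp hl).2 ha'
        (fun y hy => h0 y (List.mem_cons_of_mem _ hy))


section Graded

variable {A : Type*} [Ring A] [Algebra ℚ A] (𝒜 : ℕ → Submodule ℚ A) [GradedAlgebra 𝒜]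

theorem sum_map_neg'' {α M : Type*} [AddCommGroup M] (l : List α) (f : α → M) :
    (l.map fun x => -f x).sum = -(l.map f).sum := by
  induction l with
  | nil => simp
  | cons a l ih =>
    rw [List.map_cons, List.sum_cons, List.map_cons, List.sum_cons, ih, neg_add, add_comm]

theorem count_false_add_count_true (c : List Bool) : c.count false + c.count true = c.length := by
  induction c with
  | nil => simp
  | cons bb c ih => cases bb <;> simp [List.count_cons] <;> omega

theorem prod_mem_grade (L : List A) (h : ∀ a ∈ L, a ∈ 𝒜 1) : L.prod ∈ 𝒜 L.length := by
  induction L with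
  | nil => simpa using SetLike.one_mem_graded 𝒜
  | cons a L ih =>
    rw [List.prod_cons, List.length_cons]
    have h1 : a * L.prod ∈ 𝒜 (1 + L.length) :=
      SetLike.mul_mem_graded (h a (List.mem_cons_self))
        (ih fun x hx => h x (List.mem_cons_of_mem _ hx))
    simpa [add_comm] using h1

theorem smul_tmul_left' (c : ℚ) (u v : A) :
    ((c • u) ᵍ⊗ₜ[ℚ] v : 𝒜 ᵍ⊗[ℚ] 𝒜) = c • (u ᵍ⊗ₜ[ℚ] v) := by
  calc ((c • u) ᵍ⊗ₜ[ℚ] v : 𝒜 ᵍ⊗[ℚ] 𝒜)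
      = GradedTensorProduct.of ℚ 𝒜 𝒜 ((c • u) ⊗ₜ v) := rfl
    _ = GradedTensorProduct.of ℚ 𝒜 𝒜 (c • (u ⊗ₜ v)) := by rw [TensorProduct.smul_tmul']
    _ = c • (u ᵍ⊗ₜ[ℚ] v) := map_smul _ _ _

theorem tmul_one_mul (a u v : A) {t : ℕ} (hu : u ∈ 𝒜 t) :
    ((a ᵍ⊗ₜ[ℚ] (1 : A) : 𝒜 ᵍ⊗[ℚ] 𝒜) * (u ᵍ⊗ₜ[ℚ] v)) = (a * u) ᵍ⊗ₜ[ℚ] v :=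
  GradedTensorProduct.tmul_one_mul_coe_tmul 𝒜 𝒜 a (⟨u, hu⟩ : 𝒜 t) v

theorem one_tmul_mul (x u v : A) (hx : x ∈ 𝒜 1) {t : ℕ} (hu : u ∈ 𝒜 t) :
    (((1 : A) ᵍ⊗ₜ[ℚ] x : 𝒜 ᵍ⊗[ℚ] 𝒜) * (u ᵍ⊗ₜ[ℚ] v)) =
      ((-1 : ℚ) ^ t) • (u ᵍ⊗ₜ[ℚ] (x * v)) := by
  have h := GradedTensorProduct.tmul_coe_mul_coe_tmul 𝒜 𝒜 (1 : A) (⟨x, hx⟩ : 𝒜 1)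
    (⟨u, hu⟩ : 𝒜 t) v
  simp only [one_mul] at h
  rw [h, Units.smul_def]
  have h2 : (((-1 : ℤˣ) ^ t : ℤˣ) : ℤ) = (-1 : ℤ) ^ t := by push_cast; ring
  rw [h2, ← Int.cast_smul_eq_zsmul ℚ]
  norm_num

theorem expand (L : List A) (h : ∀ a ∈ L, a ∈ 𝒜 1) :
    (L.map fun a => (a ᵍ⊗ₜ[ℚ] (1 : A) - (1 : A) ᵍ⊗ₜ[ℚ] a : 𝒜 ᵍ⊗[ℚ] 𝒜)).prod
      = ((sels L.length).map fun c =>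
          sgn c • ((pick L c true).prod ᵍ⊗ₜ[ℚ] (pick L c false).prod : 𝒜 ᵍ⊗[ℚ] 𝒜)).sum := by
  induction L with
  | nil =>
    simp only [List.map_nil, List.prod_nil, List.length_nil, sels, List.map_cons, List.map_nil,
      List.sum_cons, List.sum_nil, add_zero, pick, sgn, List.prod_nil, one_smul]
    rw [show ((1 : A) ᵍ⊗ₜ[ℚ] (1 : A) : 𝒜 ᵍ⊗[ℚ] 𝒜) = GradedTensorProduct.of ℚ 𝒜 𝒜 1 from
      by rw [Algebra.TensorProduct.one_def], GradedTensorProduct.of_one]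
  | cons a L ih =>
    have hL : ∀ x ∈ L, x ∈ 𝒜 1 := fun x hx => h x (List.mem_cons_of_mem _ hx)
    rw [List.map_cons, List.prod_cons, ih hL, List.length_cons, sels, List.map_append,
      List.sum_append, List.map_map, List.map_map, sub_mul]
    have e1 : (a ᵍ⊗ₜ[ℚ] (1 : A) : 𝒜 ᵍ⊗[ℚ] 𝒜) *
        ((sels L.length).map fun c =>
          sgn c • ((pick L c true).prod ᵍ⊗ₜ[ℚ] (pick L c false).prod : 𝒜 ᵍ⊗[ℚ] 𝒜)).sum
        = ((sels L.length).map
            ((fun c => sgn c •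
              ((pick (a :: L) c true).prod ᵍ⊗ₜ[ℚ] (pick (a :: L) c false).prod : 𝒜 ᵍ⊗[ℚ] 𝒜))
              ∘ List.cons true)).sum := by
      rw [← List.sum_map_mul_left]
      refine congrArg List.sum (List.map_congr_left fun c hc => ?_)
      have hu : (pick L c true).prod ∈ 𝒜 (pick L c true).length :=
        prod_mem_grade 𝒜 _ (fun x hx => hL x (mem_of_mem_pick hx))
      simp only [Function.comp_apply, pick, sgn, reduceIte, Bool.true_eq_false, Bool.false_eq_true, if_false]
      rw [mul_smul_comm, tmul_one_mul 𝒜 _ _ _ hu, List.prod_cons]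
    have e2 : -(((1 : A) ᵍ⊗ₜ[ℚ] a : 𝒜 ᵍ⊗[ℚ] 𝒜) *
        ((sels L.length).map fun c =>
          sgn c • ((pick L c true).prod ᵍ⊗ₜ[ℚ] (pick L c false).prod : 𝒜 ᵍ⊗[ℚ] 𝒜)).sum)
        = ((sels L.length).map
            ((fun c => sgn c •
              ((pick (a :: L) c true).prod ᵍ⊗ₜ[ℚ] (pick (a :: L) c false).prod : 𝒜 ᵍ⊗[ℚ] 𝒜))
              ∘ List.cons false)).sum := by
      rw [← List.sum_map_mul_left, ← sum_map_neg'']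
      refine congrArg List.sum (List.map_congr_left fun c hc => ?_)
      have hlen : L.length = c.length := (length_of_mem_sels hc).symm
      have hu : (pick L c true).prod ∈ 𝒜 (pick L c true).length :=
        prod_mem_grade 𝒜 _ (fun x hx => hL x (mem_of_mem_pick hx))
      simp only [Function.comp_apply, pick, sgn, reduceIte, Bool.true_eq_false, Bool.false_eq_true, if_false]
      rw [mul_smul_comm, one_tmul_mul 𝒜 _ _ _ (h a (List.mem_cons_self)) hu,
        pick_length true hlen, List.prod_cons]
      rw [smul_smul, ← neg_smul]
      congr 1
      ring
    rw [sub_eq_add_neg, e1, e2]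

end Graded


section Functional

variable {A : Type*} [Ring A] [Algebra ℚ A] (𝒜 : ℕ → Submodule ℚ A) [GradedAlgebra 𝒜]
variable (k : ℕ) {β : Type*} (b : Module.Basis β ℚ (𝒜 k))

/-- Project to degree `k` and take the `j`-th coordinate. -/
noncomputable def coordProj (j : β) : A →ₗ[ℚ] ℚ :=
  (b.coord j) ∘ₗ ((DirectSum.component ℚ ℕ (fun i => ↥(𝒜 i)) k) ∘ₗ
    (DirectSum.decomposeLinearEquiv 𝒜).toLinearMap)

theorem coordProj_of_mem_ne {u : A} {t : ℕ} (hu : u ∈ 𝒜 t) (ht : t ≠ k) (j : β) :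
    coordProj 𝒜 k b j u = 0 := by
  have h1 : (DirectSum.decompose 𝒜 u) k = 0 := Subtype.ext (by simpa using DirectSum.decompose_of_mem_ne 𝒜 hu ht)
  simp [coordProj, ← DirectSum.apply_eq_component, DirectSum.decomposeLinearEquiv_apply, h1]

theorem coordProj_of_mem_k {u : A} (hu : u ∈ 𝒜 k) (j : β) :
    coordProj 𝒜 k b j u = b.repr ⟨u, hu⟩ j := by
  have h1 : (DirectSum.decompose 𝒜 u) k = ⟨u, hu⟩ := Subtype.ext (DirectSum.decompose_of_mem_same 𝒜 hu)
  simp [coordProj, ← DirectSum.apply_eq_component, DirectSum.decomposeLinearEquiv_apply, h1, Module.Basis.coord_apply]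

/-- The functional on the graded tensor product. -/
noncomputable def F (j₁ j₂ : β) : (𝒜 ᵍ⊗[ℚ] 𝒜) →ₗ[ℚ] ℚ :=
  (TensorProduct.lid ℚ ℚ).toLinearMap ∘ₗ
    (TensorProduct.map (coordProj 𝒜 k b j₁) (coordProj 𝒜 k b j₂)) ∘ₗ
    (GradedTensorProduct.of ℚ 𝒜 𝒜).symm.toLinearMap

theorem F_tmul (j₁ j₂ : β) (u v : A) :
    F 𝒜 k b j₁ j₂ (u ᵍ⊗ₜ[ℚ] v) = coordProj 𝒜 k b j₁ u * coordProj 𝒜 k b j₂ v := by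
  simp [F, GradedTensorProduct.tmul, smul_eq_mul]

end Functional

end Stmt9Aux


open Stmt9Aux

/-- Abstract zero-divisor argument: let `H` be a graded-commutative `ℚ`-algebra concentrated in
degrees `0,…,k` with `H^0 = ℚ·1`, and let `γ_1,…,γ_k, δ_1,…,δ_k ∈ H^1` be such that
(i) `Φ = γ_1⋯γ_k ≠ 0` and `Ψ = δ_1⋯δ_k ≠ 0` are distinct members of a basis of `H^k`,
(ii) every mixed degree-`k` monomial in the `γ`'s and `δ`'s (using at least one of each) either
vanishes or is a scalar multiple of a basis element of `H^k` different from `Φ` and `Ψ`, and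
(iii) `Φ⊗Ψ + Ψ⊗Φ ≠ 0` in `H ⊗ H`.  Then
`(∏ᵢ (γᵢ⊗1 − 1⊗γᵢ)) (∏ⱼ (δⱼ⊗1 − 1⊗δⱼ)) ≠ 0` in the graded tensor product algebra `H ⊗ H`. -/
theorem stmt_9 (A : Type*) [Ring A] [Algebra ℚ A]
    (𝒜 : ℕ → Submodule ℚ A) [GradedAlgebra 𝒜] (k : ℕ) (hk : 1 ≤ k)
    (hcomm : ∀ (i j : ℕ) (a b : A), a ∈ 𝒜 i → b ∈ 𝒜 j →
      a * b = ((-1 : ℚ) ^ (i * j)) • (b * a))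
    (hzero : 𝒜 0 = Submodule.span ℚ {1})
    (htop : ∀ j : ℕ, k < j → 𝒜 j = ⊥)
    (γ δ : Fin k → A) (hγ : ∀ i, γ i ∈ 𝒜 1) (hδ : ∀ i, δ i ∈ 𝒜 1)
    (β : Type*) (b : Module.Basis β ℚ (𝒜 k)) (iΦ iΨ : β) (hΦΨ : iΦ ≠ iΨ)
    (hbΦ : (b iΦ : A) = (List.ofFn γ).prod) (hbΨ : (b iΨ : A) = (List.ofFn δ).prod)
    (hΦ : (List.ofFn γ).prod ≠ 0) (hΨ : (List.ofFn δ).prod ≠ 0)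
    (hmixed : ∀ m : Fin k → A,
      (∀ l, (∃ i, m l = γ i) ∨ (∃ i, m l = δ i)) →
      (∃ l i, m l = γ i) → (∃ l i, m l = δ i) →
      (List.ofFn m).prod = 0 ∨
        ∃ (c : ℚ) (j : β), j ≠ iΦ ∧ j ≠ iΨ ∧ (List.ofFn m).prod = c • (b j : A))
    (hiii : ((List.ofFn γ).prod ᵍ⊗ₜ[ℚ] (List.ofFn δ).prod
        + (List.ofFn δ).prod ᵍ⊗ₜ[ℚ] (List.ofFn γ).prod : 𝒜 ᵍ⊗[ℚ] 𝒜) ≠ 0) :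
    (List.ofFn fun i => (γ i ᵍ⊗ₜ[ℚ] (1 : A) - (1 : A) ᵍ⊗ₜ[ℚ] γ i : 𝒜 ᵍ⊗[ℚ] 𝒜)).prod *
      (List.ofFn fun j => (δ j ᵍ⊗ₜ[ℚ] (1 : A) - (1 : A) ᵍ⊗ₜ[ℚ] δ j : 𝒜 ᵍ⊗[ℚ] 𝒜)).prod ≠ 0 := by
  classical
  have hLγlen : (List.ofFn γ).length = k := List.length_ofFn
  have hLδlen : (List.ofFn δ).length = k := List.length_ofFn
  set L : List A := List.ofFn γ ++ List.ofFn δ with hLdef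
  have hL1 : ∀ a ∈ L, a ∈ 𝒜 1 := by
    intro a ha
    rcases List.mem_append.mp ha with h | h <;> rcases (List.mem_ofFn.mp h) with ⟨i, rfl⟩
    · exact hγ i
    · exact hδ i
  have hLlen : L.length = k + k := by rw [hLdef, List.length_append, hLγlen, hLδlen]
  have key : (List.ofFn fun i => (γ i ᵍ⊗ₜ[ℚ] (1 : A) - (1 : A) ᵍ⊗ₜ[ℚ] γ i : 𝒜 ᵍ⊗[ℚ] 𝒜)).prod *
      (List.ofFn fun j => (δ j ᵍ⊗ₜ[ℚ] (1 : A) - (1 : A) ᵍ⊗ₜ[ℚ] δ j : 𝒜 ᵍ⊗[ℚ] 𝒜)).prod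
      = (L.map fun a => (a ᵍ⊗ₜ[ℚ] (1 : A) - (1 : A) ᵍ⊗ₜ[ℚ] a : 𝒜 ᵍ⊗[ℚ] 𝒜)).prod := by
    rw [hLdef, List.map_append, List.prod_append, List.map_ofFn, List.map_ofFn]
    rfl
  rw [key, expand 𝒜 L hL1]
  set c₀ : List Bool := List.replicate k false ++ List.replicate k true with hc₀def
  have hc₀len : c₀.length = L.length := by
    rw [hc₀def, List.length_append, List.length_replicate, List.length_replicate, hLlen]
  have hc₀mem : c₀ ∈ sels L.length := mem_sels_of_length hc₀len
  have hΦmem : (List.ofFn γ).prod ∈ 𝒜 k := hbΦ ▸ (b iΦ).2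
  have hΨmem : (List.ofFn δ).prod ∈ 𝒜 k := hbΨ ▸ (b iΨ).2
  have hpickt : pick L c₀ true = List.ofFn δ := by
    rw [hLdef, hc₀def, pick_append true (by rw [hLγlen, List.length_replicate]),
      pick_replicate_ne _ _ (by simp), pick_replicate_same true hLδlen, List.nil_append]
  have hpickf : pick L c₀ false = List.ofFn γ := by
    rw [hLdef, hc₀def, pick_append false (by rw [hLγlen, List.length_replicate]),
      pick_replicate_same false hLγlen, pick_replicate_ne _ _ (by simp), List.append_nil]
  have hcΨΨ : coordProj 𝒜 k b iΨ (List.ofFn δ).prod = 1 := by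
    rw [coordProj_of_mem_k 𝒜 k b hΨmem]
    have he : (⟨(List.ofFn δ).prod, hΨmem⟩ : 𝒜 k) = b iΨ := Subtype.ext hbΨ.symm
    rw [he, Module.Basis.repr_self, Finsupp.single_eq_same]
  have hcΦΦ : coordProj 𝒜 k b iΦ (List.ofFn γ).prod = 1 := by
    rw [coordProj_of_mem_k 𝒜 k b hΦmem]
    have he : (⟨(List.ofFn γ).prod, hΦmem⟩ : 𝒜 k) = b iΦ := Subtype.ext hbΦ.symm
    rw [he, Module.Basis.repr_self, Finsupp.single_eq_same]
  have hsgn : sgn c₀ = 1 := by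
    rw [hc₀def, sgn_c0, ← pow_mul]
    have hev : Even ((1 + k) * k) := by
      simpa [Nat.mul_comm, Nat.add_comm] using Nat.even_mul_succ_self k
    exact hev.neg_one_pow
  have hother : ∀ c ∈ sels L.length,
      c ≠ c₀ → ((F 𝒜 k b iΨ iΦ) ∘ fun c =>
        sgn c • ((pick L c true).prod ᵍ⊗ₜ[ℚ] (pick L c false).prod : 𝒜 ᵍ⊗[ℚ] 𝒜)) c = 0 := by
    intro c hc hne
    simp only [Function.comp_apply]
    rw [map_smul, F_tmul]
    have hclen : c.length = L.length := length_of_mem_sels hc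
    have hu : (pick L c true).prod ∈ 𝒜 (c.count true) := by
      rw [← pick_length true hclen.symm]
      exact prod_mem_grade 𝒜 _ fun x hx => hL1 x (mem_of_mem_pick hx)
    by_cases hts : c.count true = k
    · set c₁ := c.take k with hc₁def
      set c₂ := c.drop k with hc₂def
      have hsplit : c₁ ++ c₂ = c := List.take_append_drop k c
      have hc₁len : c₁.length = k := by
        rw [hc₁def, List.length_take, hclen, hLlen]; omega
      have hc₂len : c₂.length = k := by
        rw [hc₂def, List.length_drop, hclen, hLlen]; omega
      have hsum12 : c₁.count true + c₂.count true = k := by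
        rw [← hsplit, List.count_append] at hts; exact hts
      by_cases h1 : c₁.count true = 0
      · exfalso; apply hne
        have e1 : c₁ = List.replicate k false := by
          rw [List.eq_replicate_iff]
          refine ⟨hc₁len, fun x hx => ?_⟩
          cases x
          · rfl
          · exact absurd hx (List.count_eq_zero.mp h1)
        have e2 : c₂ = List.replicate k true := by
          rw [List.eq_replicate_iff]
          refine ⟨hc₂len, fun x hx => ?_⟩
          have h2 : c₂.count true = c₂.length := by omega
          exact (List.count_eq_length.mp h2 x hx).symm
        rw [← hsplit, e1, e2, hc₀def]
      by_cases h2 : c₁.count true = k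
      · have e1 : c₁ = List.replicate k true := by
          rw [List.eq_replicate_iff]
          refine ⟨hc₁len, fun x hx => ?_⟩
          have h3 : c₁.count true = c₁.length := by omega
          exact (List.count_eq_length.mp h3 x hx).symm
        have e2 : c₂ = List.replicate k false := by
          rw [List.eq_replicate_iff]
          refine ⟨hc₂len, fun x hx => ?_⟩
          cases x
          · rfl
          · exact absurd hx (List.count_eq_zero.mp (by omega))
        have hpt : pick L c true = List.ofFn γ := by
          rw [hLdef, ← hsplit, e1, e2, pick_append true (by rw [hLγlen, List.length_replicate]),
            pick_replicate_same true hLγlen, pick_replicate_ne _ _ (by simp), List.append_nil]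
        rw [hpt, coordProj_of_mem_k 𝒜 k b hΦmem]
        have he : (⟨(List.ofFn γ).prod, hΦmem⟩ : 𝒜 k) = b iΦ := Subtype.ext hbΦ.symm
        rw [he, Module.Basis.repr_self, Finsupp.single_apply, if_neg hΦΨ, zero_mul, smul_zero]
      · have h3 : c₂.count true ≠ 0 := by omega
        have hpt : pick L c true = pick (List.ofFn γ) c₁ true ++ pick (List.ofFn δ) c₂ true := by
          rw [hLdef, ← hsplit, pick_append true (by rw [hLγlen, hc₁len])]
        have hulen : (pick L c true).length = k := by rw [pick_length true hclen.symm, hts]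
        obtain ⟨m, hm⟩ : ∃ m : Fin k → A, List.ofFn m = pick L c true := by
          refine ⟨fun i => (pick L c true).get (Fin.cast hulen.symm i), ?_⟩
          apply List.ext_get (by simp [hulen])
          intro i hi1 hi2
          simp [List.get_ofFn]
        have hcond1 : ∀ l, (∃ i, m l = γ i) ∨ (∃ i, m l = δ i) := by
          intro l
          have hml : m l ∈ pick L c true := hm ▸ List.mem_ofFn.mpr ⟨l, rfl⟩
          have hmL := mem_of_mem_pick hml
          rw [hLdef] at hmL
          rcases List.mem_append.mp hmL with hh | hh
          · obtain ⟨i, hi⟩ := (List.mem_ofFn.mp hh)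
            exact Or.inl ⟨i, hi.symm⟩
          · obtain ⟨i, hi⟩ := (List.mem_ofFn.mp hh)
            exact Or.inr ⟨i, hi.symm⟩
        have hcond2 : ∃ l i, m l = γ i := by
          have hne1 : pick (List.ofFn γ) c₁ true ≠ [] := by
            intro hemp
            have hlp := pick_length (L := List.ofFn γ) (c := c₁) true (by rw [hLγlen, hc₁len])
            rw [hemp] at hlp
            exact h1 (by simpa using hlp.symm)
          obtain ⟨a, ha⟩ := List.exists_mem_of_ne_nil _ hne1
          have haL : a ∈ pick L c true := hpt ▸ List.mem_append_left _ ha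
          obtain ⟨l, hl⟩ := (List.mem_ofFn.mp (hm ▸ haL))
          obtain ⟨i, hi⟩ := (List.mem_ofFn.mp (mem_of_mem_pick ha))
          exact ⟨l, i, by rw [hl, ← hi]⟩
        have hcond3 : ∃ l i, m l = δ i := by
          have hne1 : pick (List.ofFn δ) c₂ true ≠ [] := by
            intro hemp
            have hlp := pick_length (L := List.ofFn δ) (c := c₂) true (by rw [hLδlen, hc₂len])
            rw [hemp] at hlp
            exact h3 (by simpa using hlp.symm)
          obtain ⟨a, ha⟩ := List.exists_mem_of_ne_nil _ hne1
          have haL : a ∈ pick L c true := hpt ▸ List.mem_append_right _ ha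
          obtain ⟨l, hl⟩ := (List.mem_ofFn.mp (hm ▸ haL))
          obtain ⟨i, hi⟩ := (List.mem_ofFn.mp (mem_of_mem_pick ha))
          exact ⟨l, i, by rw [hl, ← hi]⟩
        rcases hmixed m hcond1 hcond2 hcond3 with h0 | ⟨q, j, hjΦ, hjΨ, heq⟩
        · rw [hm] at h0
          rw [h0, map_zero, zero_mul, smul_zero]
        · rw [hm] at heq
          have humem : (pick L c true).prod ∈ 𝒜 k := hts ▸ hu
          rw [coordProj_of_mem_k 𝒜 k b humem]
          have he : (⟨(pick L c true).prod, humem⟩ : 𝒜 k) = q • b j := Subtype.ext (by simpa using heq)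
          rw [he, map_smul, Finsupp.smul_apply, Module.Basis.repr_self, Finsupp.single_apply,
            if_neg hjΨ, smul_zero, zero_mul, smul_zero]
    · rw [coordProj_of_mem_ne 𝒜 k b hu hts, zero_mul, smul_zero]
  intro hzero'
  have hFsum : F 𝒜 k b iΨ iΦ (((sels L.length).map fun c =>
      sgn c • ((pick L c true).prod ᵍ⊗ₜ[ℚ] (pick L c false).prod : 𝒜 ᵍ⊗[ℚ] 𝒜)).sum) = 1 := by
    rw [map_list_sum, List.map_map]
    rw [sum_map_eq_of_nodup (nodup_sels _) hc₀mem _ hother]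
    simp only [Function.comp_apply]
    rw [map_smul, F_tmul, hpickt, hpickf, hcΨΨ, hcΦΦ, hsgn]
    norm_num
  rw [hzero', map_zero] at hFsum
  exact one_ne_zero hFsum.symm
end
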